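/- Let n be odd and let Z ⊆ {0,1}^n be a code. Let Z^ex ⊆ {0,1}^{n+1} be the extended code obtained by appending to every z = (z_1,…,z_n) ∈ Z the parity bit z_{n+1} = z_1 ⊕ ⋯ ⊕ z_n. Then D^{L2}(Z^ex) = 2·D^{L2}(Z) + (1/2^{n+1})·C(2n,n). -/

import Mathlib

/-- The quadratic discrepancy of a code `Z ⊆ {0,1}^m`. -/
noncomputable def disc (m : ℕ) (Z : Finset (Fin m → Bool)) : ℝ :=
  ∑ t ∈ Finset.range (m + 1), ∑ x : Fin m → Bool,
    ((Z.card : ℝ)⁻¹ * ((Z.filter (fun z => hammingDist x z ≤ t)).card : ℝ)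
      - ((2 : ℝ) ^ m)⁻¹ *
          ((Finset.univ.filter (fun z : Fin m → Bool => hammingDist x z ≤ t)).card : ℝ)) ^ 2

/-- Extend a binary word by its parity bit `z_{n+1} = z_1 ⊕ ⋯ ⊕ z_n`. -/
def extendParity (n : ℕ) (z : Fin n → Bool) : Fin (n + 1) → Bool :=
  Fin.snoc z (decide ((Finset.univ.filter (fun i : Fin n => z i = true)).card % 2 = 1))

/-!
Write `f_r(x)` for the local discrepancy of `Z` in the ball of radius `r` around `x`. All words
of `Z^ex` have even weight, so `d(snoc x b, z^ex) ≡ |x| + b (mod 2)`: the radius-`t` ball around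
`snoc x b` meets `Z^ex` exactly as the radius-`t` or the radius-`(t - 1)` ball around `x` meets
`Z`, according to the parity of `|x| + b + t`, while its volume is `V(t) + V(t - 1)`, where `V(r)`
is the volume of a radius-`r` ball in `{0,1}^n`. Summing over `b` gives
`f_t(x)² + f_{t-1}(x)² + δ_t (f_t(x) - f_{t-1}(x)) + δ_t² / 2` with `δ_t = C(n,t) / 2^n`. Local discrepancies have mean zero over `x`, so the cross terms vanish, the
squares add up to `D(Z)` twice, and `Σ_t C(n,t)² = C(2n,n)`.
-/

open Finset

theorem Fin.sum_univ_fun_snoc {α M : Type*} [Fintype α] [AddCommMonoid M] {m : ℕ}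
    (f : (Fin (m + 1) → α) → M) :
    ∑ y, f y = ∑ x : Fin m → α, ∑ b, f (Fin.snoc x b) := by
  rw [← (Fin.snocEquiv fun _ => α).sum_comp, Fintype.sum_prod_type, sum_comm]
  rfl

theorem Bool.sum_toNat_add_emod_two {M : Type*} [AddCommMonoid M] (k : ℤ) (g : ℤ → M) :
    ∑ b : Bool, g ((b.toNat + k) % 2) = g 0 + g 1 := by
  rcases Int.emod_two_eq_zero_or_one k with hk | hk
  · simp [Int.add_emod, hk, add_comm]
  · simp [Int.add_emod, hk]

namespace HammingCube

variable {m : ℕ}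

def weight (x : Fin m → Bool) : ℕ := #{i | x i = true}

theorem hammingDist_emod_two (x z : Fin m → Bool) :
    hammingDist x z % 2 = (weight x + weight z) % 2 := by
  have h : weight x + weight z = 2 * #{i | x i = true ∧ z i = true} + hammingDist x z := by
    simp only [weight, hammingDist, card_filter, mul_sum, ← sum_add_distrib]
    refine sum_congr rfl fun i _ => ?_
    cases x i <;> cases z i <;> rfl
  omega

theorem hammingDist_snoc (x z : Fin m → Bool) (b c : Bool) :
    hammingDist (Fin.snoc x b : Fin (m + 1) → Bool) (Fin.snoc z c)
      = hammingDist x z + if b = c then 0 else 1 := by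
  simp only [hammingDist, card_filter, Fin.sum_univ_castSucc, Fin.snoc_castSucc, Fin.snoc_last,
    ite_not]

theorem card_filter_hammingDist_eq (x : Fin m → Bool) (k : ℕ) :
    #{z | hammingDist x z = k} = m.choose k := by
  rw [show m.choose k = #(powersetCard k (univ : Finset (Fin m))) by
    rw [card_powersetCard, card_fin]]
  refine card_nbij' (fun z => ({i | x i ≠ z i} : Finset (Fin m)))
    (fun s i => if i ∈ s then !x i else x i) ?_ ?_ ?_ ?_
  · intro z hz
    simpa [mem_powersetCard_univ, hammingDist] using hz
  · intro s hs
    simp only [coe_filter, mem_univ, true_and, Set.mem_ofPred_eq]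
    rw [hammingDist, ← (mem_powersetCard_univ.mp hs)]
    congr 1
    ext i
    by_cases hi : i ∈ s <;> simp [hi]
  · intro z _
    funext i
    cases hx : x i <;> cases hz : z i <;> simp [hx, hz]
  · intro s _
    ext i
    by_cases hi : i ∈ s <;> simp [hi]

/-- Radii are integers, so that the ball of radius `-1` is empty. -/
def ballCount (W : Finset (Fin m → Bool)) (x : Fin m → Bool) (r : ℤ) : ℕ :=
  #{z ∈ W | (hammingDist x z : ℤ) ≤ r}

noncomputable def localDisc (W : Finset (Fin m → Bool)) (x : Fin m → Bool) (r : ℤ) : ℝ :=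
  (#W : ℝ)⁻¹ * ballCount W x r - ((2 : ℝ) ^ m)⁻¹ * ballCount univ x r

theorem disc_eq_sum_localDisc (W : Finset (Fin m → Bool)) :
    disc m W = ∑ t ∈ range (m + 1), ∑ x, localDisc W x t ^ 2 := by
  simp only [disc, localDisc, ballCount, Nat.cast_le]

theorem ballCount_of_neg (W : Finset (Fin m → Bool)) (x : Fin m → Bool) {r : ℤ} (hr : r < 0) :
    ballCount W x r = 0 := by
  rw [ballCount, card_eq_zero, filter_eq_empty_iff]
  intro z _
  omega

theorem ballCount_of_le (W : Finset (Fin m → Bool)) (x : Fin m → Bool) {r : ℤ} (hr : m ≤ r) :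
    ballCount W x r = #W := by
  rw [ballCount, filter_true_of_mem]
  intro z _
  have : hammingDist x z ≤ m := hammingDist_le_card_fintype.trans_eq (Fintype.card_fin m)
  omega

theorem ballCount_eq_sub_one_add (W : Finset (Fin m → Bool)) (x : Fin m → Bool) (t : ℕ) :
    ballCount W x t = ballCount W x (t - 1) + #{z ∈ W | hammingDist x z = t} := by
  rw [ballCount, ballCount, ← card_union_of_disjoint (disjoint_filter.mpr fun z _ h => by omega),
    ← filter_or]
  congr 1
  ext z
  simp only [mem_filter]
  exact and_congr_right fun _ => by omega

theorem ballCount_univ_eq_sub_one_add_choose (x : Fin m → Bool) (t : ℕ) :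
    ballCount univ x t = ballCount univ x (t - 1) + m.choose t := by
  rw [ballCount_eq_sub_one_add, card_filter_hammingDist_eq]

theorem ballCount_univ_snoc (x : Fin m → Bool) (b : Bool) (r : ℤ) :
    ballCount univ (Fin.snoc x b : Fin (m + 1) → Bool) r
      = ballCount univ x r + ballCount univ x (r - 1) := by
  simp only [ballCount, card_filter, Fin.sum_univ_fun_snoc, hammingDist_snoc, Fintype.sum_bool,
    ← sum_add_distrib]
  refine sum_congr rfl fun z _ => ?_
  have hshift : ((hammingDist x z + 1 : ℕ) : ℤ) ≤ r ↔ (hammingDist x z : ℤ) ≤ r - 1 := by omega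
  cases b <;> simp only [Bool.false_eq_true, Bool.true_eq_false, ↓reduceIte, add_zero, hshift]
  exact add_comm _ _

theorem ballCount_univ_eq_sum_choose (x : Fin m → Bool) (r : ℤ) :
    ballCount univ x r = ∑ k ∈ range (m + 1) with ((k : ℕ) : ℤ) ≤ r, m.choose k := by
  rw [ballCount, card_eq_sum_card_fiberwise (f := hammingDist x)
    (t := {k ∈ range (m + 1) | ((k : ℕ) : ℤ) ≤ r})]
  · refine sum_congr rfl fun k hk => ?_
    rw [filter_filter, ← card_filter_hammingDist_eq x k]
    simp only [mem_filter] at hk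
    congr 1
    ext z
    simp only [mem_filter, mem_univ, true_and, and_iff_right_iff_imp]
    omega
  · intro z hz
    simp only [coe_filter, mem_univ, true_and, Set.mem_ofPred_eq, mem_range] at hz ⊢
    have : hammingDist x z ≤ m := hammingDist_le_card_fintype.trans_eq (Fintype.card_fin m)
    omega

theorem sum_ballCount (W : Finset (Fin m → Bool)) (y : Fin m → Bool) (r : ℤ) :
    ∑ x, ballCount W x r = #W * ballCount univ y r := by
  calc ∑ x, ballCount W x r = ∑ z ∈ W, ballCount univ z r := by
        simp only [ballCount, card_filter]
        rw [sum_comm]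
        simp only [hammingDist_comm]
    _ = #W * ballCount univ y r := by
        simp only [ballCount_univ_eq_sum_choose _ r, sum_const, smul_eq_mul]

theorem sum_localDisc {W : Finset (Fin m → Bool)} (hW : W.Nonempty) (r : ℤ) :
    ∑ x, localDisc W x r = 0 := by
  have hW' : (#W : ℝ) ≠ 0 := by exact_mod_cast hW.card_pos.ne'
  simp only [localDisc, sum_sub_distrib, ← mul_sum, ← Nat.cast_sum,
    sum_ballCount _ (fun _ => false), card_univ, Fintype.card_fun, Fintype.card_bool,
    Fintype.card_fin]
  push_cast
  field_simp
  ring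

theorem extendParity_injective : Function.Injective (extendParity m) := by
  intro z z' h
  funext i
  simpa [extendParity] using congrFun h i.castSucc

theorem hammingDist_snoc_extendParity_le_iff (x z : Fin m → Bool) (b : Bool) (r : ℤ) :
    (hammingDist (Fin.snoc x b : Fin (m + 1) → Bool) (extendParity m z) : ℤ) ≤ r ↔
      (hammingDist x z : ℤ) ≤ r - (b.toNat + (weight x + r)) % 2 := by
  have hpar := hammingDist_emod_two x z
  have hbit : extendParity m z = Fin.snoc z (decide (weight z % 2 = 1)) := rfl
  rw [hbit, hammingDist_snoc]
  by_cases hz : weight z % 2 = 1 <;> cases b <;> simp [hz] <;> omega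

theorem ballCount_image_extendParity (Z : Finset (Fin m → Bool)) (x : Fin m → Bool) (b : Bool)
    (r : ℤ) :
    ballCount (Z.image (extendParity m)) (Fin.snoc x b) r
      = ballCount Z x (r - (b.toNat + (weight x + r)) % 2) := by
  rw [ballCount, filter_image, card_image_of_injective _ extendParity_injective]
  simp only [hammingDist_snoc_extendParity_le_iff, ballCount]

theorem localDisc_of_neg (W : Finset (Fin m → Bool)) (x : Fin m → Bool) {r : ℤ} (hr : r < 0) :
    localDisc W x r = 0 := by
  simp [localDisc, ballCount_of_neg _ _ hr]

theorem localDisc_of_le {W : Finset (Fin m → Bool)} (hW : W.Nonempty) (x : Fin m → Bool) {r : ℤ}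
    (hr : m ≤ r) : localDisc W x r = 0 := by
  have hW' : (#W : ℝ) ≠ 0 := by exact_mod_cast hW.card_pos.ne'
  simp [localDisc, ballCount_of_le _ _ hr, hW', card_univ]

theorem sum_range_sum_localDisc_sq {W : Finset (Fin m → Bool)} (hW : W.Nonempty) :
    ∑ t ∈ range (m + 2), ∑ x, localDisc W x t ^ 2 = disc m W := by
  rw [sum_range_succ, disc_eq_sum_localDisc]
  simp [localDisc_of_le hW]

theorem sum_range_sum_localDisc_sub_one_sq (W : Finset (Fin m → Bool)) :
    ∑ t ∈ range (m + 2), ∑ x, localDisc W x (t - 1) ^ 2 = disc m W := by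
  rw [sum_range_succ', disc_eq_sum_localDisc]
  simp [localDisc_of_neg]

theorem localDisc_image_extendParity (Z : Finset (Fin m → Bool)) (x : Fin m → Bool) (b : Bool)
    (r : ℤ) :
    localDisc (Z.image (extendParity m)) (Fin.snoc x b) r
      = (#Z : ℝ)⁻¹ * ballCount Z x (r - (b.toNat + (weight x + r)) % 2)
        - ((2 : ℝ) ^ (m + 1))⁻¹ * (ballCount univ x r + ballCount univ x (r - 1)) := by
  rw [localDisc, ballCount_image_extendParity, ballCount_univ_snoc,
    card_image_of_injective _ extendParity_injective]
  push_cast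
  ring

theorem sum_bool_localDisc_image_extendParity_sq (Z : Finset (Fin m → Bool)) (x : Fin m → Bool)
    (t : ℕ) :
    ∑ b, localDisc (Z.image (extendParity m)) (Fin.snoc x b) t ^ 2
      = localDisc Z x t ^ 2 + localDisc Z x (t - 1) ^ 2
        + ((2 : ℝ) ^ m)⁻¹ * m.choose t * (localDisc Z x t - localDisc Z x (t - 1))
        + (((2 : ℝ) ^ m)⁻¹ * m.choose t) ^ 2 / 2 := by
  have hparity := Bool.sum_toNat_add_emod_two (weight x + (t : ℤ)) fun ε =>
    ((#Z : ℝ)⁻¹ * ballCount Z x (t - ε)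
      - ((2 : ℝ) ^ (m + 1))⁻¹ * (ballCount univ x t + ballCount univ x (t - 1))) ^ 2
  beta_reduce at hparity
  simp only [localDisc_image_extendParity]
  rw [hparity, sub_zero, localDisc, localDisc, ballCount_univ_eq_sub_one_add_choose]
  push_cast
  ring

theorem sum_range_sum_sq_choose (m : ℕ) :
    ∑ t ∈ range (m + 2), ∑ _x : Fin m → Bool, (((2 : ℝ) ^ m)⁻¹ * m.choose t) ^ 2 / 2
      = ((2 : ℝ) ^ (m + 1))⁻¹ * (2 * m).choose m := by
  have hterm (c : ℝ) : (2 ^ m : ℕ) • ((((2 : ℝ) ^ m)⁻¹ * c) ^ 2 / 2)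
      = ((2 : ℝ) ^ (m + 1))⁻¹ * c ^ 2 := by
    rw [nsmul_eq_mul]
    push_cast
    field_simp
    ring
  simp only [sum_range_succ _ (m + 1), Nat.choose_succ_self, sum_const, card_univ,
    Fintype.card_fun, Fintype.card_bool, Fintype.card_fin, hterm, ← mul_sum]
  rw [← Nat.sum_range_choose_sq]
  push_cast
  ring

end HammingCube

open HammingCube

theorem discrepancy_extended_code (n : ℕ)
    (Z : Finset (Fin n → Bool)) (hZ : Z.Nonempty) :
    disc (n + 1) (Z.image (extendParity n))
      = 2 * disc n Z + ((2 : ℝ) ^ (n + 1))⁻¹ * Nat.choose (2 * n) n := by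
  calc disc (n + 1) (Z.image (extendParity n))
      = ∑ t ∈ range (n + 2), ∑ x, ∑ b,
          localDisc (Z.image (extendParity n)) (Fin.snoc x b) t ^ 2 := by
        simp only [disc_eq_sum_localDisc, Fin.sum_univ_fun_snoc]
    _ = ∑ t ∈ range (n + 2), ∑ x, (localDisc Z x t ^ 2 + localDisc Z x (t - 1) ^ 2
          + ((2 : ℝ) ^ n)⁻¹ * n.choose t * (localDisc Z x t - localDisc Z x (t - 1))
          + (((2 : ℝ) ^ n)⁻¹ * n.choose t) ^ 2 / 2) := by
        simp only [sum_bool_localDisc_image_extendParity_sq]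
    _ = disc n Z + disc n Z + ((2 : ℝ) ^ (n + 1))⁻¹ * Nat.choose (2 * n) n := by
        simp only [sum_add_distrib, ← mul_sum, sum_sub_distrib, sum_localDisc hZ, sub_zero,
          mul_zero, add_zero, sum_range_sum_localDisc_sq hZ,
          sum_range_sum_localDisc_sub_one_sq, sum_range_sum_sq_choose]
    _ = 2 * disc n Z + ((2 : ℝ) ^ (n + 1))⁻¹ * Nat.choose (2 * n) n := by ring
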